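/- Let Θ and A be nonempty finite sets, d a natural number, α > 0, σ₀ > 0, ω₀ ∈ EuclideanSpace ℝ (Fin d). Consider N experts; expert i has H_i transitions, where transition j carries a context-indexed action-feature map Φ_{i,j} : Θ → A → EuclideanSpace ℝ (Fin d) and a demonstrated action a_{i,j} ∈ A, and expert i carries context weights w_i : Θ → ℝ with w_i θ > 0 (the prior over contexts times the ω-independent transition likelihood factors). Define z_{i,j}(θ, ω) = ∑_{a ∈ A} exp(⟪Φ_{i,j} θ a, ω⟫ / α), the per-context likelihood L_i(θ, ω) = ∏_{j < H_i} exp(⟪Φ_{i,j} θ (a_{i,j}), ω⟫ / α) / z_{i,j}(θ, ω), and the unnormalized posterior F(ω) = exp(−‖ω − ω₀‖² / (2σ₀²)) * ∏_{i < N} ∑_{θ ∈ Θ} w_i θ * L_i(θ, ω). Then F(ω) > 0, ω ↦ log F(ω) is differentiable everywhere, and α times its gradient at ω equals ∑_{i < N} ∑_{θ ∈ Θ} q_i(θ | ω) • ∑_{j < H_i} (Φ_{i,j} θ (a_{i,j}) − ∑_{a ∈ A} p_{i,j}(a | θ, ω) • Φ_{i,j} θ a) − (α / σ₀²) • (ω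 − ω₀), where q_i(θ | ω) = w_i θ * L_i(θ, ω) / ∑_{θ'} w_i θ' * L_i(θ', ω) and p_{i,j}(a | θ, ω) = exp(⟪Φ_{i,j} θ a, ω⟫ / α) / z_{i,j}(θ, ω). -/

import Mathlib

open Real Finset
open scoped RealInnerProductSpace

/-!
`log F` is the Gaussian log-prior plus, for each expert, the log of a positive mixture
`∑ θ, w θ * L θ`. The gradient of `log ∑ k, f k` is the average of the gradients of
`log f k` weighted by the responsibilities `f k / ∑ f`. Over contexts these responsibilities
are the posterior weights `q`; over actions, applied to the partition function, they are the
Boltzmann probabilities, so `log p(a | ω) = ⟪Φ a, ω⟫ / α - log z(ω)` has gradient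
`α⁻¹ • (Φ a - ∑ b, p b • Φ b)`. The likelihood `L` is a product of such probabilities, so its
log-gradient is the sum of these over the transitions.
-/

section GradientCalculus

variable {E : Type*} [NormedAddCommGroup E] [InnerProductSpace ℝ E] [CompleteSpace E]
  {f f₁ f₂ : E → ℝ} {g g₁ g₂ x : E}

theorem HasGradientAt.add (h₁ : HasGradientAt f₁ g₁ x) (h₂ : HasGradientAt f₂ g₂ x) :
    HasGradientAt (fun y => f₁ y + f₂ y) (g₁ + g₂) x := by
  rw [hasGradientAt_iff_hasFDerivAt, map_add]
  exact h₁.hasFDerivAt.add h₂.hasFDerivAt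

theorem HasGradientAt.sub (h₁ : HasGradientAt f₁ g₁ x) (h₂ : HasGradientAt f₂ g₂ x) :
    HasGradientAt (fun y => f₁ y - f₂ y) (g₁ - g₂) x := by
  rw [hasGradientAt_iff_hasFDerivAt, map_sub]
  exact h₁.hasFDerivAt.sub h₂.hasFDerivAt

theorem HasGradientAt.sum {ι : Type*} {s : Finset ι} {f : ι → E → ℝ} {g : ι → E}
    (h : ∀ i ∈ s, HasGradientAt (f i) (g i) x) :
    HasGradientAt (fun y => ∑ i ∈ s, f i y) (∑ i ∈ s, g i) x := by
  rw [hasGradientAt_iff_hasFDerivAt, map_sum]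
  exact HasFDerivAt.fun_sum fun i hi => (h i hi).hasFDerivAt

theorem HasDerivAt.comp_hasGradientAt (x : E) {φ : ℝ → ℝ} {φ' : ℝ} (hφ : HasDerivAt φ φ' (f x))
    (hf : HasGradientAt f g x) : HasGradientAt (fun y => φ (f y)) (φ' • g) x := by
  rw [hasGradientAt_iff_hasFDerivAt, map_smulₛₗ, RCLike.conj_to_real]
  exact hφ.comp_hasFDerivAt x hf.hasFDerivAt

theorem hasGradientAt_inner_left (v x : E) : HasGradientAt (fun y => ⟪v, y⟫) v x :=
  hasGradientAt_iff_hasFDerivAt.2 (innerSL ℝ v).hasFDerivAt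

theorem hasGradientAt_inner_left_div (α : ℝ) (v x : E) :
    HasGradientAt (fun y => ⟪v, y⟫ / α) (α⁻¹ • v) x := by
  simpa only [id, one_div] using
    ((hasDerivAt_id _).div_const α).comp_hasGradientAt x (hasGradientAt_inner_left v x)

theorem hasGradientAt_norm_sub_sq (v x : E) :
    HasGradientAt (fun y => ‖y - v‖ ^ 2) ((2 : ℝ) • (x - v)) x := by
  rw [hasGradientAt_iff_hasFDerivAt, map_smulₛₗ, RCLike.conj_to_real]
  refine ((hasFDerivAt_id x).sub_const v).norm_sq.congr_fderiv ?_
  ext y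
  simp [InnerProductSpace.toDual_apply_apply]

theorem HasGradientAt.of_log (hf : ∀ y, 0 < f y) (h : HasGradientAt (fun y => log (f y)) g x) :
    HasGradientAt f (f x • g) x := by
  simpa only [fun y => exp_log (hf y)] using (hasDerivAt_exp _).comp_hasGradientAt x h

theorem hasGradientAt_log_sum {ι : Type*} {s : Finset ι} (hs : s.Nonempty) {f : ι → E → ℝ}
    {g : ι → E} (hpos : ∀ i ∈ s, ∀ y, 0 < f i y)
    (h : ∀ i ∈ s, HasGradientAt (fun y => log (f i y)) (g i) x) :
    HasGradientAt (fun y => log (∑ i ∈ s, f i y)) (∑ i ∈ s, (f i x / ∑ j ∈ s, f j x) • g i) x := by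
  have hS : ∑ j ∈ s, f j x ≠ 0 := (sum_pos (fun i hi => hpos i hi x) hs).ne'
  have hsum := HasGradientAt.sum fun i hi => (h i hi).of_log (hpos i hi)
  convert (hasDerivAt_log hS).comp_hasGradientAt x hsum using 1
  simp only [smul_sum, smul_smul, div_eq_inv_mul]

theorem hasGradientAt_log_sum_mul {ι : Type*} {s : Finset ι} (hs : s.Nonempty) {w : ι → ℝ}
    (hw : ∀ i ∈ s, 0 < w i) {f : ι → E → ℝ} {g : ι → E} (hpos : ∀ i ∈ s, ∀ y, 0 < f i y)
    (h : ∀ i ∈ s, HasGradientAt (fun y => log (f i y)) (g i) x) :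
    HasGradientAt (fun y => log (∑ i ∈ s, w i * f i y))
      (∑ i ∈ s, (w i * f i x / ∑ j ∈ s, w j * f j x) • g i) x := by
  refine hasGradientAt_log_sum hs (fun i hi y => mul_pos (hw i hi) (hpos i hi y)) fun i hi => ?_
  have h' := (hasGradientAt_const x (log (w i))).add (h i hi)
  simpa only [log_mul (hw i hi).ne' (hpos i hi _).ne', zero_add] using h'

theorem hasGradientAt_neg_norm_sub_sq_div_two_mul (c : ℝ) (μ x : E) :
    HasGradientAt (fun y => -‖y - μ‖ ^ 2 / (2 * c)) (-c⁻¹ • (x - μ)) x := by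
  have h := ((hasDerivAt_neg _).div_const (2 * c)).comp_hasGradientAt x
    (hasGradientAt_norm_sub_sq μ x)
  convert h using 1
  rw [smul_smul]
  congr 1
  ring

end GradientCalculus

noncomputable section Boltzmann

variable {E : Type*} [NormedAddCommGroup E] [InnerProductSpace ℝ E] {A : Type*} [Fintype A]

def boltzmannPartition (α : ℝ) (φ : A → E) (ω : E) : ℝ :=
  ∑ a, exp (⟪φ a, ω⟫ / α)

def boltzmannProb (α : ℝ) (φ : A → E) (a : A) (ω : E) : ℝ :=
  exp (⟪φ a, ω⟫ / α) / boltzmannPartition α φ ω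

variable [Nonempty A] (α : ℝ) (φ : A → E)

theorem boltzmannPartition_pos (ω : E) : 0 < boltzmannPartition α φ ω :=
  sum_pos (fun _ _ => exp_pos _) univ_nonempty

theorem boltzmannProb_pos (a : A) (ω : E) : 0 < boltzmannProb α φ a ω :=
  div_pos (exp_pos _) (boltzmannPartition_pos α φ ω)

variable [CompleteSpace E]

theorem hasGradientAt_log_boltzmannPartition (x : E) :
    HasGradientAt (fun y => log (boltzmannPartition α φ y))
      (α⁻¹ • ∑ a, boltzmannProb α φ a x • φ a) x := by
  have h := hasGradientAt_log_sum univ_nonempty (fun a _ y => exp_pos (⟪φ a, y⟫ / α))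
    fun a _ => by simpa only [log_exp] using hasGradientAt_inner_left_div α (φ a) x
  simpa only [boltzmannProb, boltzmannPartition, smul_sum, smul_comm α⁻¹] using h

theorem hasGradientAt_log_boltzmannProb (a : A) (x : E) :
    HasGradientAt (fun y => log (boltzmannProb α φ a y))
      (α⁻¹ • (φ a - ∑ b, boltzmannProb α φ b x • φ b)) x := by
  have h := (hasGradientAt_inner_left_div α (φ a) x).sub
    (hasGradientAt_log_boltzmannPartition α φ x)
  simpa only [boltzmannProb, log_div (exp_pos _).ne' (boltzmannPartition_pos α φ _).ne', log_exp,
    smul_sub] using h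

end Boltzmann

noncomputable section Trajectory

variable {E : Type*} [NormedAddCommGroup E] [InnerProductSpace ℝ E] {A : Type*} [Fintype A]
  {ι : Type*} [Fintype ι]

def trajectoryLikelihood (α : ℝ) (φ : ι → A → E) (act : ι → A) (ω : E) : ℝ :=
  ∏ j, boltzmannProb α (φ j) (act j) ω

variable [Nonempty A] (α : ℝ) (φ : ι → A → E) (act : ι → A)

theorem trajectoryLikelihood_pos (ω : E) : 0 < trajectoryLikelihood α φ act ω :=
  prod_pos fun j _ => boltzmannProb_pos α (φ j) (act j) ω

theorem hasGradientAt_log_trajectoryLikelihood [CompleteSpace E] (x : E) :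
    HasGradientAt (fun y => log (trajectoryLikelihood α φ act y))
      (α⁻¹ • ∑ j, (φ j (act j) - ∑ a, boltzmannProb α (φ j) a x • φ j a)) x := by
  have h := HasGradientAt.sum (s := univ) fun j _ =>
    hasGradientAt_log_boltzmannProb α (φ j) (act j) x
  simpa only [trajectoryLikelihood, log_prod fun j _ => (boltzmannProb_pos α (φ j) (act j) _).ne',
    smul_sum] using h

end Trajectory

theorem contextual_BIRL_logPosterior_gradient_general
    {Θ A : Type*} [Fintype Θ] [Nonempty Θ] [Fintype A] [Nonempty A] {d : ℕ}
    (α σ₀ : ℝ) (hα : 0 < α)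
    (ω₀ : EuclideanSpace ℝ (Fin d)) (N : ℕ) (H : Fin N → ℕ)
    (Φ : (i : Fin N) → Fin (H i) → Θ → A → EuclideanSpace ℝ (Fin d))
    (act : (i : Fin N) → Fin (H i) → A)
    (w : Fin N → Θ → ℝ) (hw : ∀ i θ, 0 < w i θ)
    (z : (i : Fin N) → Fin (H i) → Θ → EuclideanSpace ℝ (Fin d) → ℝ)
    (hz : ∀ i j θ ω, z i j θ ω = ∑ a : A, Real.exp (⟪Φ i j θ a, ω⟫ / α))
    (L : Fin N → Θ → EuclideanSpace ℝ (Fin d) → ℝ)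
    (hL : ∀ i θ ω, L i θ ω =
      ∏ j : Fin (H i), Real.exp (⟪Φ i j θ (act i j), ω⟫ / α) / z i j θ ω)
    (F : EuclideanSpace ℝ (Fin d) → ℝ)
    (hF : ∀ ω, F ω =
      Real.exp (-‖ω - ω₀‖ ^ 2 / (2 * σ₀ ^ 2)) * ∏ i : Fin N, ∑ θ : Θ, w i θ * L i θ ω)
    (q : Fin N → Θ → EuclideanSpace ℝ (Fin d) → ℝ)
    (hq : ∀ i θ ω, q i θ ω = w i θ * L i θ ω / ∑ θ' : Θ, w i θ' * L i θ' ω)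
    (p : (i : Fin N) → Fin (H i) → A → Θ → EuclideanSpace ℝ (Fin d) → ℝ)
    (hp : ∀ i j a θ ω, p i j a θ ω = Real.exp (⟪Φ i j θ a, ω⟫ / α) / z i j θ ω)
    (ω : EuclideanSpace ℝ (Fin d)) :
    0 < F ω ∧
    Differentiable ℝ (fun ω' => Real.log (F ω')) ∧
    α • gradient (fun ω' => Real.log (F ω')) ω =
      (∑ i : Fin N, ∑ θ : Θ, q i θ ω •
        ∑ j : Fin (H i), (Φ i j θ (act i j) - ∑ a : A, p i j a θ ω • Φ i j θ a))
        - (α / σ₀ ^ 2) • (ω - ω₀) := by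
  have hp_eq : ∀ i j a θ y, p i j a θ y = boltzmannProb α (Φ i j θ) a y := fun i j a θ y => by
    rw [hp, hz]; rfl
  have hL_eq : ∀ i θ, L i θ = trajectoryLikelihood α (fun j => Φ i j θ) (act i) :=
    fun i θ => funext fun y => by simp only [hL, hz]; rfl
  have hmarginal_pos : ∀ i y, 0 < ∑ θ, w i θ * L i θ y := fun i y =>
    sum_pos (fun θ _ => mul_pos (hw i θ) (hL_eq i θ ▸ trajectoryLikelihood_pos _ _ _ y))
      univ_nonempty
  have hlogF : ∀ y, log (F y) = -‖y - ω₀‖ ^ 2 / (2 * σ₀ ^ 2) +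
      ∑ i, log (∑ θ, w i θ * trajectoryLikelihood α (fun j => Φ i j θ) (act i) y) := fun y => by
    rw [hF, log_mul (exp_pos _).ne' (prod_pos fun i _ => hmarginal_pos i y).ne', log_exp,
      log_prod fun i _ => (hmarginal_pos i y).ne']
    simp only [hL_eq]
  have hgrad : ∀ y, HasGradientAt (fun ω' => log (F ω')) (-(σ₀ ^ 2)⁻¹ • (y - ω₀) +
      ∑ i, ∑ θ, q i θ y • α⁻¹ • ∑ j, (Φ i j θ (act i j) - ∑ a, p i j a θ y • Φ i j θ a)) y := by
    intro y
    have hmarginal := fun i => hasGradientAt_log_sum_mul univ_nonempty (fun θ _ => hw i θ)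
      (fun θ _ => trajectoryLikelihood_pos α _ (act i))
      fun θ _ => hasGradientAt_log_trajectoryLikelihood α (fun j => Φ i j θ) (act i) y
    refine HasGradientAt.congr_of_eventuallyEq ?_ (.of_forall hlogF)
    simpa only [hq, hp_eq, hL_eq] using
      (hasGradientAt_neg_norm_sub_sq_div_two_mul (σ₀ ^ 2) ω₀ y).add
        (HasGradientAt.sum (s := univ) fun i _ => hmarginal i)
  refine ⟨hF ω ▸ mul_pos (exp_pos _) (prod_pos fun i _ => hmarginal_pos i ω),
    fun y => (hgrad y).differentiableAt, ?_⟩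
  have hprior : α * -(σ₀ ^ 2)⁻¹ = -(α / σ₀ ^ 2) := by ring
  rw [(hgrad ω).gradient, smul_add, smul_smul, hprior, neg_smul, add_comm, ← sub_eq_add_neg]
  simp only [smul_sum, smul_comm α, inv_smul_smul₀ hα.ne']

/-- Theorem 1 of the paper: the gradient of the contextual Bayesian IRL
log-posterior. The unnormalized posterior combines a Gaussian prior `N(ω₀, σ₀² I)`
with per-expert likelihoods that are mixtures over an unobserved finite context
`θ` of products of Boltzmann action probabilities; α times the gradient of its log
is the posterior-context-weighted sum of feature differences minus
`(α/σ₀²) • (ω - ω₀)` (i.e., `(ω - ω₀)/ς₀²` with `ς₀² = σ₀²/α`). -/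
theorem contextual_BIRL_logPosterior_gradient
    {Θ A : Type*} [Fintype Θ] [Nonempty Θ] [Fintype A] [Nonempty A] {d : ℕ}
    (α σ₀ : ℝ) (hα : 0 < α) (hσ₀ : 0 < σ₀)
    (ω₀ : EuclideanSpace ℝ (Fin d)) (N : ℕ) (H : Fin N → ℕ)
    (Φ : (i : Fin N) → Fin (H i) → Θ → A → EuclideanSpace ℝ (Fin d))
    (act : (i : Fin N) → Fin (H i) → A)
    (w : Fin N → Θ → ℝ) (hw : ∀ i θ, 0 < w i θ)
    (z : (i : Fin N) → Fin (H i) → Θ → EuclideanSpace ℝ (Fin d) → ℝ)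
    (hz : ∀ i j θ ω, z i j θ ω = ∑ a : A, Real.exp (⟪Φ i j θ a, ω⟫ / α))
    (L : Fin N → Θ → EuclideanSpace ℝ (Fin d) → ℝ)
    (hL : ∀ i θ ω, L i θ ω =
      ∏ j : Fin (H i), Real.exp (⟪Φ i j θ (act i j), ω⟫ / α) / z i j θ ω)
    (F : EuclideanSpace ℝ (Fin d) → ℝ)
    (hF : ∀ ω, F ω =
      Real.exp (-‖ω - ω₀‖ ^ 2 / (2 * σ₀ ^ 2)) * ∏ i : Fin N, ∑ θ : Θ, w i θ * L i θ ω)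
    (q : Fin N → Θ → EuclideanSpace ℝ (Fin d) → ℝ)
    (hq : ∀ i θ ω, q i θ ω = w i θ * L i θ ω / ∑ θ' : Θ, w i θ' * L i θ' ω)
    (p : (i : Fin N) → Fin (H i) → A → Θ → EuclideanSpace ℝ (Fin d) → ℝ)
    (hp : ∀ i j a θ ω, p i j a θ ω = Real.exp (⟪Φ i j θ a, ω⟫ / α) / z i j θ ω)
    (ω : EuclideanSpace ℝ (Fin d)) :
    0 < F ω ∧
    Differentiable ℝ (fun ω' => Real.log (F ω')) ∧
    α • gradient (fun ω' => Real.log (F ω')) ω =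
      (∑ i : Fin N, ∑ θ : Θ, q i θ ω •
        ∑ j : Fin (H i), (Φ i j θ (act i j) - ∑ a : A, p i j a θ ω • Φ i j θ a))
        - (α / σ₀ ^ 2) • (ω - ω₀) :=
  contextual_BIRL_logPosterior_gradient_general α σ₀ hα ω₀ N H Φ act w hw z hz L hL F hF q hq p hp ω
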